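/- Strong group incentive ratio upper bound for Probabilistic Serial: for every coalition size c ≥ 1 the following holds. Let there be n agents and m divisible goods, let v_1, …, v_n be additive valuations, let ≻ be a profile of strict orderings with v_a consistent with ≻_a for every a, let C ⊆ [n] be a coalition with |C| ≤ c, and let ≻'_C be manipulated orderings reported by the agents in C. If v_a(PS_a(≻)) ≤ v_a(PS_a(≻'_C, ≻_{−C})) for every a ∈ C, then v_a(PS_a(≻'_C, ≻_{−C})) ≤ (c + 1)·v_a(PS_a(≻)) for every a ∈ C. -/

import Mathlib

/-- A strict total ordering over goods, given as a list from most preferred to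
least preferred: it must be a duplicate-free enumeration of all goods. -/
def IsOrder {γ : Type*} [Fintype γ] (l : List γ) : Prop :=
  l.Nodup ∧ ∀ g : γ, g ∈ l

/-- An additive valuation `v` (given by its values on single goods) is consistent
with the strict ordering `l` if strictly more valuable goods appear earlier. -/
def Consistent {γ : Type*} [DecidableEq γ] (v : γ → ℝ) (l : List γ) : Prop :=
  ∀ g g' : γ, v g > v g' → l.idxOf g < l.idxOf g'

/-- Agent `a`'s most preferred good in the set `S` of available goods. -/
def psTop {n m : ℕ} (pref : Fin n → List (Fin m)) (S : Finset (Fin m)) (a : Fin n) :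
    Option (Fin m) :=
  (pref a).find? (fun g => decide (g ∈ S))

/-- `N(g, S)`: the set of agents whose most preferred available good is `g`. -/
def psN {n m : ℕ} (pref : Fin n → List (Fin m)) (S : Finset (Fin m)) (g : Fin m) :
    Finset (Fin n) :=
  Finset.univ.filter (fun a => psTop pref S a = some g)

/-- The available goods currently being eaten by at least one agent. -/
def psActive {n m : ℕ} (pref : Fin n → List (Fin m)) (S : Finset (Fin m)) :
    Finset (Fin m) :=
  S.filter (fun g => (psN pref S g).Nonempty)

open scoped Classical in
/-- Combinatorial implementation of Probabilistic Serial.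
`psState pref k = (S⁽ᵏ⁾, x⁽ᵏ⁾, t⁽ᵏ⁾)`: after step `k`, the set of available
goods, the partial allocation, and the length `t⁽ᵏ⁾` of step `k` (with `t⁽⁰⁾ = 0`). -/
noncomputable def psState {n m : ℕ} (pref : Fin n → List (Fin m)) :
    ℕ → Finset (Fin m) × (Fin n → Fin m → ℝ) × ℝ
  | 0 => (Finset.univ, fun _ _ => 0, 0)
  | k + 1 =>
    let st := psState pref k
    let tg : Fin m → ℝ := fun g => (1 - ∑ a, st.2.1 a g) / ((psN pref st.1 g).card : ℝ)
    if h : (psActive pref st.1).Nonempty then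
      let t := (psActive pref st.1).inf' h tg
      (st.1.filter (fun g => ¬(g ∈ psActive pref st.1 ∧ tg g = t)),
        fun a g => if psTop pref st.1 a = some g then st.2.1 a g + t else st.2.1 a g,
        t)
    else st

/-- The fractional allocation output by Probabilistic Serial (the mechanism
terminates after at most `m` steps, since each step fully consumes a good). -/
noncomputable def psAlloc {n m : ℕ} (pref : Fin n → List (Fin m)) :
    Fin n → Fin m → ℝ :=
  (psState pref m).2.1

/-!
Run the eating process in continuous time. Let `U` be a top segment of agent `a`'s true ranking
(such as the goods she values above some level) and `T` the time at which `U` is used up under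
truthful reports. Truthfully, `a` eats from `U` throughout `[0, T]`, so she gets at least `T` of it.
Under the manipulation, the total amount `Σ_g max 0 (x_g(t) - x'_g(t))` by which consumption lags
behind the truthful one grows at rate at most `|C|`: an honest agent eating a lagging good
truthfully also eats a lagging good under the manipulation (the same good, or one that is
already finished truthfully but not yet under the manipulation). So at time `T` at most `|C| T` of
`U` is left, and `a` ends up with at most `(|C| + 1) T` of `U`. Comparing the two bounds on every
top segment gives the value bound, through the layer-cake decomposition of an additive valuation.
-/

open Finset Filter Topology

theorem Finset.sum_mul_nonneg_of_forall_sum_filter_nonneg {ι : Type*} (S : Finset ι)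
    {v d : ι → ℝ} (hv : ∀ i ∈ S, 0 ≤ v i)
    (hd : ∀ s, 0 ≤ s → 0 ≤ ∑ i ∈ S with s < v i, d i) :
    0 ≤ ∑ i ∈ S, v i * d i := by
  classical
  induction S using Finset.strongInduction generalizing v with
  | H S ih =>
    rcases S.eq_empty_or_nonempty with rfl | hS
    · simp
    obtain ⟨i₀, hi₀, hmin⟩ := S.exists_min_image v hS
    -- Subtract the least value `μ`: the level sets of `v - μ` are those of `v`, shifted by `μ`.
    set μ := v i₀
    have hbottom : 0 ≤ μ * ∑ i ∈ S, d i := by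
      rcases (hv i₀ hi₀).eq_or_lt with h | h
      · simp [μ, ← h]
      · refine mul_nonneg h.le ?_
        simpa [filter_true_of_mem fun i hi => h.trans_le (hmin i hi)] using hd 0 le_rfl
    have hrest : 0 ≤ ∑ i ∈ S.erase i₀, (v i - μ) * d i := by
      refine ih _ (erase_ssubset hi₀) (fun i hi => sub_nonneg.2 (hmin i (mem_of_mem_erase hi)))
        fun s hs => ?_
      have hlevel : (S.erase i₀).filter (fun i => s < v i - μ) = S.filter (s + μ < v ·) := by
        ext i
        simp only [mem_filter, mem_erase, lt_sub_iff_add_lt]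
        exact ⟨fun h => ⟨h.1.2, h.2⟩, fun h => ⟨⟨fun e => by subst e; linarith, h.1⟩, h.2⟩⟩
      rw [hlevel]
      exact hd _ (add_nonneg hs (hv i₀ hi₀))
    have hsplit :
        ∑ i ∈ S, v i * d i = μ * ∑ i ∈ S, d i + ∑ i ∈ S.erase i₀, (v i - μ) * d i := by
      rw [← sum_erase_add S _ hi₀, mul_sum, ← sum_erase_add S _ hi₀]
      simp only [sub_mul, sum_sub_distrib]
      ring
    rw [hsplit]
    exact add_nonneg hbottom hrest

theorem Finset.sum_mul_le_sum_mul_of_forall_sum_filter_le {ι : Type*} [Fintype ι]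
    {v y z : ι → ℝ} (hv : ∀ i, 0 ≤ v i)
    (h : ∀ s, 0 ≤ s → ∑ i with s < v i, y i ≤ ∑ i with s < v i, z i) :
    ∑ i, v i * y i ≤ ∑ i, v i * z i := by
  have := univ.sum_mul_nonneg_of_forall_sum_filter_nonneg (d := z - y) (fun i _ => hv i)
    fun s hs => by simpa [sum_sub_distrib] using h s hs
  simpa [mul_sub, sum_sub_distrib] using this

theorem le_add_mul_of_eventually_le {f : ℝ → ℝ} {a b L : ℝ}
    (hf : ContinuousOn f (Set.Icc a b))
    (h : ∀ x ∈ Set.Ico a b, ∀ᶠ z in 𝓝[>] x, f z ≤ f x + L * (z - x)) :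
    ∀ x ∈ Set.Icc a b, f x ≤ f a + L * (x - a) := by
  refine image_le_of_liminf_slope_right_le_deriv_boundary (B := fun x => f a + L * (x - a))
    (B' := fun _ => L) hf (by simp) (by fun_prop)
    (fun x _ => ((hasDerivAt_id x).sub_const a |>.const_mul L |>.const_add (f a)
      |>.hasDerivWithinAt).congr_deriv (by simp)) fun x hx r hr => Eventually.frequently ?_
  filter_upwards [h x hx, self_mem_nhdsWithin] with z hz hxz
  rw [slope_def_field]
  exact (div_le_iff₀ (sub_pos.2 hxz)).2 (by linarith) |>.trans_lt hr

theorem Finset.sum_max_zero_sub_le {ι : Type*} (S : Finset ι) (a b : ι → ℝ) :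
    ∑ i ∈ S, max 0 (b i) - ∑ i ∈ S, max 0 (a i) ≤
      ∑ i ∈ S with 0 < b i, (b i - a i) := by
  rw [sum_filter, ← sum_sub_distrib]
  refine sum_le_sum fun i _ => ?_
  split_ifs with h
  · rw [max_eq_right h.le]; linarith [le_max_right 0 (a i)]
  · rw [max_eq_left (not_lt.1 h)]; linarith [le_max_left 0 (a i)]

theorem List.idxOf_le_of_find?_eq_some {α : Type*} [DecidableEq α] {p : α → Bool} :
    ∀ {l : List α} {x y : α}, l.find? p = some x → y ∈ l → p y → l.idxOf x ≤ l.idxOf y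
  | [], _, _, hx, _, _ => by simp at hx
  | h :: t, x, y, hx, hy, hpy => by
    by_cases hh : p h
    · obtain rfl : h = x := by simpa [List.find?_cons_of_pos hh] using hx
      simp
    · rw [List.find?_cons_of_neg hh] at hx
      have hxh : h ≠ x := fun e => hh (e ▸ List.find?_some hx)
      have hyh : h ≠ y := fun e => hh (e ▸ hpy)
      rw [List.idxOf_cons_ne _ hxh, List.idxOf_cons_ne _ hyh]
      exact Nat.succ_le_succ (idxOf_le_of_find?_eq_some hx (by simpa [Ne.symm hyh] using hy) hpy)

def IsTopSegment {γ : Type*} [DecidableEq γ] (l : List γ) (U : Finset γ) : Prop :=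
  ∀ g ∈ U, ∀ g', l.idxOf g' ≤ l.idxOf g → g' ∈ U

namespace ProbabilisticSerial

section Choice

variable {n m : ℕ} {pref pref' : Fin n → List (Fin m)} {S S' : Finset (Fin m)} {a : Fin n}
  {g g' : Fin m}

theorem psTop_mem (h : psTop pref S a = some g) : g ∈ S := by
  simpa using List.find?_some h

theorem exists_psTop (ha : IsOrder (pref a)) (hg : g ∈ S) :
    ∃ g₀, psTop pref S a = some g₀ :=
  Option.isSome_iff_exists.1 <| List.find?_isSome.2 ⟨g, ha.2 g, by simpa using hg⟩

theorem idxOf_psTop_le (ha : IsOrder (pref a)) (h : psTop pref S a = some g) (hg' : g' ∈ S) :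
    (pref a).idxOf g ≤ (pref a).idxOf g' :=
  List.idxOf_le_of_find?_eq_some h (ha.2 g') (by simpa using hg')

theorem psTop_congr (h : pref' a = pref a) : psTop pref' S a = psTop pref S a := by
  simp [psTop, h]

theorem psTop_eq_or_notMem (ha : IsOrder (pref a)) (h : psTop pref S a = some g)
    (h' : psTop pref S' a = some g') (hg : g ∈ S') : g' = g ∨ g' ∉ S := by
  refine or_iff_not_imp_right.2 fun hg' => ?_
  have := le_antisymm (idxOf_psTop_le ha h' hg) (idxOf_psTop_le ha h (not_not.1 hg'))
  exact (List.idxOf_inj (ha.2 g')).1 this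

theorem psTop_mem_of_isTopSegment {U : Finset (Fin m)} (ha : IsOrder (pref a))
    (hU : IsTopSegment (pref a) U) (h : psTop pref S a = some g) (hgU : g' ∈ U) (hgS : g' ∈ S) :
    g ∈ U :=
  hU g' hgU g (idxOf_psTop_le ha h hgS)

theorem psN_eq_empty (hg : g ∉ S) : psN pref S g = ∅ :=
  filter_eq_empty_iff.2 fun _ _ h => hg (psTop_mem h)

theorem psN_eq_empty_of_notMem_psActive (hg : g ∉ psActive pref S) : psN pref S g = ∅ := by
  by_cases hgS : g ∈ S
  · simpa [psActive, hgS, not_nonempty_iff_eq_empty] using hg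
  · exact psN_eq_empty hgS

theorem card_biUnion_psN (P : Finset (Fin m)) :
    #(P.biUnion (psN pref S)) = ∑ g ∈ P, #(psN pref S g) :=
  card_biUnion fun g _ g' _ hne => disjoint_filter.2 fun _ _ h h' => hne (by simp_all)

theorem sum_card_psN_le_add_card (P : Finset (Fin m)) (C : Finset (Fin n))
    (h : ∀ b ∉ C, ∀ g ∈ P, psTop pref S b = some g →
      ∃ g' ∈ P, psTop pref' S' b = some g') :
    ∑ g ∈ P, #(psN pref S g) ≤ ∑ g ∈ P, #(psN pref' S' g) + #C := by
  rw [← card_biUnion_psN, ← card_biUnion_psN]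
  refine (card_le_card fun b hb => ?_).trans (card_union_le _ _)
  by_cases hbC : b ∈ C
  · exact mem_union_right _ hbC
  obtain ⟨g, hgP, hb⟩ := mem_biUnion.1 hb
  obtain ⟨g', hg'P, hb'⟩ := h b hbC g hgP (mem_filter.1 hb).2
  exact mem_union_left _ (mem_biUnion.2 ⟨g', hg'P, mem_filter.2 ⟨mem_univ b, hb'⟩⟩)

end Choice

section Run

variable {n m : ℕ} (pref : Fin n → List (Fin m))

noncomputable def avail (k : ℕ) : Finset (Fin m) := (psState pref k).1

noncomputable def alloc (k : ℕ) : Fin n → Fin m → ℝ := (psState pref k).2.1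

noncomputable def consumed (k : ℕ) (g : Fin m) : ℝ := ∑ a, alloc pref k a g

noncomputable def timeToFinish (k : ℕ) (g : Fin m) : ℝ :=
  (1 - consumed pref k g) / #(psN pref (avail pref k) g)

/-- Unlike the step length stored in `psState`, this is `0` once nothing is being eaten. -/
noncomputable def stepLen (k : ℕ) : ℝ :=
  if h : (psActive pref (avail pref k)).Nonempty then
    (psActive pref (avail pref k)).inf' h (timeToFinish pref k)
  else 0

noncomputable def stepTime (k : ℕ) : ℝ := ∑ j ∈ range k, stepLen pref j

noncomputable def eatRate (k : ℕ) (a : Fin n) (g : Fin m) : ℝ :=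
  if psTop pref (avail pref k) a = some g then 1 else 0

variable {pref} {k : ℕ} {a : Fin n} {g : Fin m}

theorem psState_succ_of_nonempty (h : (psActive pref (avail pref k)).Nonempty) :
    psState pref (k + 1) = ((avail pref k).filter fun g =>
        ¬(g ∈ psActive pref (avail pref k) ∧ timeToFinish pref k g = stepLen pref k),
      fun a g => alloc pref k a g + stepLen pref k * eatRate pref k a g, stepLen pref k) := by
  have h' : (psActive pref (psState pref k).1).Nonempty := h
  have hL : stepLen pref k = (psActive pref (avail pref k)).inf' h (timeToFinish pref k) :=
    dif_pos h
  rw [psState, dif_pos h', hL]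
  refine Prod.ext rfl (Prod.ext (funext₂ fun a g => ?_) rfl)
  show (if psTop pref (avail pref k) a = some g then alloc pref k a g + _ else _) = _
  by_cases ht : psTop pref (avail pref k) a = some g
  · simp only [eatRate, ht, if_true, mul_one]; rfl
  · simp only [eatRate, ht, if_false, mul_zero, add_zero]; rfl

theorem psState_succ_of_not_nonempty (h : ¬(psActive pref (avail pref k)).Nonempty) :
    psState pref (k + 1) = psState pref k :=
  dif_neg h

theorem avail_succ : avail pref (k + 1) = (avail pref k).filter
    (fun g => ¬(g ∈ psActive pref (avail pref k) ∧ timeToFinish pref k g = stepLen pref k)) := by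
  by_cases h : (psActive pref (avail pref k)).Nonempty
  · rw [avail, psState_succ_of_nonempty h]
  · rw [avail, psState_succ_of_not_nonempty h, not_nonempty_iff_eq_empty.1 h]
    simp [avail]

theorem alloc_succ :
    alloc pref (k + 1) a g = alloc pref k a g + stepLen pref k * eatRate pref k a g := by
  by_cases h : (psActive pref (avail pref k)).Nonempty
  · rw [alloc, psState_succ_of_nonempty h]
  · simp [alloc, psState_succ_of_not_nonempty h, stepLen, h]

theorem sum_eatRate : ∑ a, eatRate pref k a g = #(psN pref (avail pref k) g) := by
  simp [eatRate, psN, sum_boole]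

theorem consumed_succ :
    consumed pref (k + 1) g =
      consumed pref k g + stepLen pref k * #(psN pref (avail pref k) g) := by
  simp only [consumed, alloc_succ, sum_add_distrib, ← mul_sum, sum_eatRate]

theorem stepLen_le_timeToFinish (hg : g ∈ psActive pref (avail pref k)) :
    stepLen pref k ≤ timeToFinish pref k g := by
  rw [stepLen, dif_pos ⟨g, hg⟩]
  exact inf'_le _ hg

theorem mem_avail_iff_and_consumed_le_one (k : ℕ) (g : Fin m) :
    (g ∈ avail pref k ↔ consumed pref k g < 1) ∧ consumed pref k g ≤ 1 := by
  induction k generalizing g with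
  | zero => simp [avail, consumed, alloc, psState]
  | succ k ih =>
    obtain ⟨hmem, hle⟩ := ih g
    rw [avail_succ, consumed_succ, mem_filter]
    by_cases hA : g ∈ psActive pref (avail pref k)
    · obtain ⟨hgS, hN⟩ := mem_filter.1 hA
      have hlt := hmem.1 hgS
      have hN : (0 : ℝ) < #(psN pref (avail pref k) g) := by exact_mod_cast card_pos.2 hN
      have hL := stepLen_le_timeToFinish hA
      rw [timeToFinish, le_div_iff₀ hN] at hL
      have hL' : timeToFinish pref k g = stepLen pref k ↔
          1 - consumed pref k g = stepLen pref k * #(psN pref (avail pref k) g) := by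
        rw [timeToFinish, div_eq_iff hN.ne']
      simp only [hgS, hA, true_and, hL']
      refine ⟨⟨fun h => ?_, fun h e => by linarith⟩, by linarith⟩
      linarith [lt_of_le_of_ne hL (Ne.symm h)]
    · simp [psN_eq_empty_of_notMem_psActive hA, hA, hmem, hle]

theorem mem_avail_iff : g ∈ avail pref k ↔ consumed pref k g < 1 :=
  (mem_avail_iff_and_consumed_le_one k g).1

theorem consumed_le_one : consumed pref k g ≤ 1 :=
  (mem_avail_iff_and_consumed_le_one k g).2

theorem consumed_eq_one (hg : g ∉ avail pref k) : consumed pref k g = 1 :=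
  consumed_le_one.antisymm (not_lt.1 (mem_avail_iff.not.1 hg))

theorem stepLen_nonneg : 0 ≤ stepLen pref k := by
  by_cases h : (psActive pref (avail pref k)).Nonempty
  · rw [stepLen, dif_pos h]
    exact le_inf' h _ fun g _ => div_nonneg (sub_nonneg.2 consumed_le_one) (Nat.cast_nonneg _)
  · simp [stepLen, h]

theorem stepTime_zero : stepTime pref 0 = 0 := sum_range_zero _

theorem stepTime_succ : stepTime pref (k + 1) = stepTime pref k + stepLen pref k :=
  sum_range_succ _ _

theorem stepTime_mono : Monotone (stepTime pref) :=
  monotone_nat_of_le_succ fun k => by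
    rw [stepTime_succ]; linarith [stepLen_nonneg (pref := pref) (k := k)]

theorem stepTime_nonneg : 0 ≤ stepTime pref k :=
  stepTime_zero (pref := pref) ▸ stepTime_mono (Nat.zero_le k)

theorem eatRate_nonneg : 0 ≤ eatRate pref k a g := by
  unfold eatRate; split_ifs <;> norm_num

theorem sum_eatRate_le_one : ∑ g, eatRate pref k a g ≤ 1 := by
  unfold eatRate
  rcases psTop pref (avail pref k) a with _ | g₀ <;> simp

theorem alloc_eq_sum :
    alloc pref k a g = ∑ j ∈ range k, stepLen pref j * eatRate pref j a g := by
  induction k with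
  | zero => simp [alloc, psState]
  | succ k ih => rw [alloc_succ, ih, sum_range_succ]

theorem alloc_mono : Monotone fun k => alloc pref k a g := by
  intro k k' h
  simp only [alloc_eq_sum]
  exact sum_le_sum_of_subset_of_nonneg (range_subset_range.2 h)
    fun _ _ _ => mul_nonneg stepLen_nonneg eatRate_nonneg

theorem alloc_nonneg : 0 ≤ alloc pref k a g := by
  rw [alloc_eq_sum]
  exact sum_nonneg fun _ _ => mul_nonneg stepLen_nonneg eatRate_nonneg

theorem card_avail_succ_lt (hn : 0 < n) (hord : ∀ a, IsOrder (pref a))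
    (h : (avail pref k).Nonempty) : #(avail pref (k + 1)) < #(avail pref k) := by
  obtain ⟨g, hg⟩ := h
  obtain ⟨g₀, hg₀⟩ := exists_psTop (hord ⟨0, hn⟩) hg
  have hA : (psActive pref (avail pref k)).Nonempty :=
    ⟨g₀, mem_filter.2 ⟨psTop_mem hg₀, ⟨0, hn⟩, mem_filter.2 ⟨mem_univ _, hg₀⟩⟩⟩
  obtain ⟨g₁, hg₁, hmin⟩ := exists_mem_eq_inf' hA (timeToFinish pref k)
  have hfin : g₁ ∉ avail pref (k + 1) := by
    simp [avail_succ, hg₁, stepLen, hA, hmin]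
  refine card_lt_card ((ssubset_iff_of_subset ?_).2 ⟨g₁, (mem_filter.1 hg₁).1, hfin⟩)
  exact avail_succ (pref := pref) ▸ filter_subset _ _

theorem avail_eq_empty (hn : 0 < n) (hord : ∀ a, IsOrder (pref a)) : avail pref m = ∅ := by
  have hcard : ∀ k, #(avail pref k) ≤ m - k := by
    intro k
    induction k with
    | zero => simp [avail, psState]
    | succ k ih =>
      rcases (avail pref k).eq_empty_or_nonempty with h | h
      · have : avail pref (k + 1) = ∅ := by
          rw [avail_succ, h, filter_empty]
        simp [this]
      · have := card_avail_succ_lt hn hord h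
        omega
  simpa using hcard m

end Run

section ContinuousTime

variable {n m : ℕ} (pref : Fin n → List (Fin m))

noncomputable def elapsed (k : ℕ) (t : ℝ) : ℝ :=
  max 0 (min t (stepTime pref (k + 1)) - stepTime pref k)

/-- The eating process in continuous time: step `k` occupies `[stepTime k, stepTime (k + 1)]`. -/
noncomputable def allocAt (t : ℝ) (a : Fin n) (g : Fin m) : ℝ :=
  ∑ k ∈ range m, eatRate pref k a g * elapsed pref k t

noncomputable def consumedAt (t : ℝ) (g : Fin m) : ℝ := ∑ a, allocAt pref t a g

variable {pref} {k : ℕ} {a : Fin n} {g : Fin m} {t : ℝ}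

theorem elapsed_le : elapsed pref k t ≤ stepLen pref k :=
  max_le stepLen_nonneg <| by
    linarith [min_le_right t (stepTime pref (k + 1)), stepTime_succ (pref := pref) (k := k)]

theorem elapsed_of_le (h : stepTime pref (k + 1) ≤ t) : elapsed pref k t = stepLen pref k := by
  rw [elapsed, min_eq_right h, stepTime_succ, add_sub_cancel_left, max_eq_right stepLen_nonneg]

theorem elapsed_of_ge (h : t ≤ stepTime pref k) : elapsed pref k t = 0 :=
  max_eq_left (by linarith [min_le_left t (stepTime pref (k + 1))])

theorem elapsed_of_mem (h₁ : stepTime pref k ≤ t) (h₂ : t ≤ stepTime pref (k + 1)) :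
    elapsed pref k t = t - stepTime pref k := by
  rw [elapsed, min_eq_left h₂, max_eq_right (sub_nonneg.2 h₁)]

theorem sum_range_elapsed (ht : 0 ≤ t) (K : ℕ) :
    ∑ k ∈ range K, elapsed pref k t = min t (stepTime pref K) := by
  induction K with
  | zero => simp [stepTime_zero, ht]
  | succ K ih =>
    rw [sum_range_succ, ih]
    rcases le_total t (stepTime pref K) with h | h
    · rw [elapsed_of_ge h, min_eq_left h, min_eq_left (h.trans (stepTime_mono K.le_succ)),
        add_zero]
    · rcases le_total t (stepTime pref (K + 1)) with h' | h'
      · rw [elapsed_of_mem h h', min_eq_right h, min_eq_left h']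
        ring
      · rw [elapsed_of_le h', min_eq_right h, min_eq_right h', stepTime_succ]

@[fun_prop]
theorem continuous_allocAt : Continuous fun t => allocAt pref t a g := by
  unfold allocAt elapsed
  fun_prop

theorem allocAt_nonneg : 0 ≤ allocAt pref t a g :=
  sum_nonneg fun _ _ => mul_nonneg eatRate_nonneg (le_max_left _ _)

theorem allocAt_le_alloc : allocAt pref t a g ≤ alloc pref m a g := by
  rw [allocAt, alloc_eq_sum]
  exact sum_le_sum fun k _ => by
    rw [mul_comm]
    exact mul_le_mul_of_nonneg_right elapsed_le eatRate_nonneg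

theorem sum_allocAt_le (ht : 0 ≤ t) : ∑ g, allocAt pref t a g ≤ t := by
  calc ∑ g, allocAt pref t a g
        = ∑ k ∈ range m, (∑ g, eatRate pref k a g) * elapsed pref k t := by
        simp only [allocAt, sum_mul]
        exact sum_comm
    _ ≤ ∑ k ∈ range m, elapsed pref k t :=
        sum_le_sum fun k _ => mul_le_of_le_one_left (le_max_left _ _) sum_eatRate_le_one
    _ ≤ t := by rw [sum_range_elapsed ht]; exact min_le_left _ _

theorem allocAt_of_mem_step (hk : k < m) (h₁ : stepTime pref k ≤ t)
    (h₂ : t ≤ stepTime pref (k + 1)) :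
    allocAt pref t a g = alloc pref k a g + (t - stepTime pref k) * eatRate pref k a g := by
  have hdone : ∑ j ∈ range k, eatRate pref j a g * elapsed pref j t =
      ∑ j ∈ range k, stepLen pref j * eatRate pref j a g := sum_congr rfl fun j hj => by
    rw [elapsed_of_le ((stepTime_mono (mem_range.1 hj)).trans h₁), mul_comm]
  have hfuture : ∑ j ∈ Ico (k + 1) m, eatRate pref j a g * elapsed pref j t = 0 :=
    sum_eq_zero fun j hj => by
      rw [elapsed_of_ge (h₂.trans (stepTime_mono (mem_Ico.1 hj).1)), mul_zero]
  rw [allocAt, alloc_eq_sum, ← sum_range_add_sum_Ico _ hk, sum_range_succ, hdone, hfuture,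
    elapsed_of_mem h₁ h₂]
  ring

theorem allocAt_of_le (h : stepTime pref m ≤ t) : allocAt pref t a g = alloc pref m a g := by
  rw [allocAt, alloc_eq_sum]
  refine sum_congr rfl fun k hk => ?_
  rw [elapsed_of_le ((stepTime_mono (mem_range.1 hk)).trans h), mul_comm]

theorem allocAt_stepTime {K : ℕ} (hK : K ≤ m) :
    allocAt pref (stepTime pref K) a g = alloc pref K a g := by
  rcases hK.lt_or_eq with hK | rfl
  · rw [allocAt_of_mem_step hK le_rfl (stepTime_mono K.le_succ), sub_self, zero_mul, add_zero]
  · exact allocAt_of_le le_rfl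

theorem consumedAt_of_mem_step (hk : k < m) (h₁ : stepTime pref k ≤ t)
    (h₂ : t ≤ stepTime pref (k + 1)) :
    consumedAt pref t g =
      consumed pref k g + (t - stepTime pref k) * #(psN pref (avail pref k) g) := by
  simp only [consumedAt, allocAt_of_mem_step hk h₁ h₂, sum_add_distrib, ← mul_sum, sum_eatRate,
    consumed]

theorem consumedAt_le_one : consumedAt pref t g ≤ 1 :=
  (sum_le_sum fun _ _ => allocAt_le_alloc).trans consumed_le_one

theorem consumedAt_lt_one (hk : k < m) (h₁ : stepTime pref k ≤ t)
    (h₂ : t < stepTime pref (k + 1)) (hg : g ∈ avail pref k) : consumedAt pref t g < 1 := by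
  rw [consumedAt_of_mem_step hk h₁ h₂.le]
  rcases (#(psN pref (avail pref k) g)).eq_zero_or_pos with hN | hN
  · simpa [hN] using mem_avail_iff.1 hg
  · have hN : (0 : ℝ) < #(psN pref (avail pref k) g) := by exact_mod_cast hN
    have hfull := consumed_succ (pref := pref) (k := k) (g := g) ▸ consumed_le_one
    rw [stepTime_succ] at h₂
    have := mul_lt_mul_of_pos_right (show t - stepTime pref k < stepLen pref k by linarith) hN
    linarith

theorem consumedAt_eq_one (hk : k < m) (h₁ : stepTime pref k ≤ t)
    (h₂ : t ≤ stepTime pref (k + 1)) (hg : g ∉ avail pref k) : consumedAt pref t g = 1 := by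
  rw [consumedAt_of_mem_step hk h₁ h₂, psN_eq_empty hg, consumed_eq_one hg]
  simp

theorem consumedAt_eq_one_of_le (hn : 0 < n) (hord : ∀ a, IsOrder (pref a))
    (h : stepTime pref m ≤ t) : consumedAt pref t g = 1 := by
  simp only [consumedAt, allocAt_of_le h]
  exact consumed_eq_one (by simp [avail_eq_empty hn hord])

theorem exists_mem_step (h₀ : 0 ≤ t) (ht : t < stepTime pref m) :
    ∃ k < m, stepTime pref k ≤ t ∧ t < stepTime pref (k + 1) := by
  classical
  have hex : ∃ j, t < stepTime pref j := ⟨m, ht⟩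
  obtain ⟨k, hk⟩ : ∃ k, Nat.find hex = k + 1 :=
    Nat.exists_eq_succ_of_ne_zero fun h => by
      have := Nat.find_spec hex
      rw [h, stepTime_zero] at this
      linarith
  refine ⟨k, ?_, not_lt.1 (Nat.find_min hex (by omega)), hk ▸ Nat.find_spec hex⟩
  have := Nat.find_min' hex ht
  omega

end ContinuousTime

section Deficit

variable {n m : ℕ} (pref pref' : Fin n → List (Fin m))

noncomputable def deficit (t : ℝ) : ℝ :=
  ∑ g, max 0 (consumedAt pref t g - consumedAt pref' t g)

variable {pref pref'} {C : Finset (Fin n)}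

theorem deficit_nonneg (t : ℝ) : 0 ≤ deficit pref pref' t :=
  sum_nonneg fun _ _ => le_max_left _ _

theorem continuous_deficit : Continuous (deficit pref pref') := by
  unfold deficit consumedAt
  fun_prop

theorem deficit_zero : deficit pref pref' 0 = 0 := by
  have h (p : Fin n → List (Fin m)) (g : Fin m) : consumedAt p 0 g = 0 := by
    simpa [consumedAt, stepTime_zero, alloc_eq_sum] using
      sum_congr rfl fun a _ => allocAt_stepTime (pref := p) (a := a) (g := g) (Nat.zero_le m)
  simp [deficit, h]

/-- An honest agent eating a lagging good under `pref` also eats a lagging good under `pref'`. -/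
theorem deficit_le_add_of_mem_step (hord : ∀ a, IsOrder (pref a))
    (hhonest : ∀ b ∉ C, pref' b = pref b) {k k' : ℕ} {t₁ t : ℝ} (hk : k < m) (hk' : k' < m)
    (h₁ : stepTime pref k ≤ t₁) (h₁' : stepTime pref' k' ≤ t₁) (ht₁ : t₁ ≤ t)
    (ht : t < stepTime pref (k + 1)) (ht' : t < stepTime pref' (k' + 1)) :
    deficit pref pref' t ≤ deficit pref pref' t₁ + #C * (t - t₁) := by
  set N : Fin m → ℝ := fun g => #(psN pref (avail pref k) g)
  set N' : Fin m → ℝ := fun g => #(psN pref' (avail pref' k') g)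
  have hgrowth (g : Fin m) :
      consumedAt pref t g - consumedAt pref' t g - (consumedAt pref t₁ g - consumedAt pref' t₁ g)
        = (t - t₁) * (N g - N' g) := by
    rw [consumedAt_of_mem_step hk h₁ (ht₁.trans ht.le),
      consumedAt_of_mem_step hk (h₁.trans ht₁) ht.le,
      consumedAt_of_mem_step hk' h₁' (ht₁.trans ht'.le),
      consumedAt_of_mem_step hk' (h₁'.trans ht₁) ht'.le]
    ring
  set P := univ.filter fun g => 0 < consumedAt pref t g - consumedAt pref' t g
  have hlagging : ∀ b ∉ C, ∀ g ∈ P, psTop pref (avail pref k) b = some g →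
      ∃ g' ∈ P, psTop pref' (avail pref' k') b = some g' := by
    intro b hb g hgP htop
    have hgP : consumedAt pref' t g < consumedAt pref t g := sub_pos.1 (mem_filter.1 hgP).2
    have hg : g ∈ avail pref' k' := by
      by_contra h
      rw [consumedAt_eq_one hk' (h₁'.trans ht₁) ht'.le h] at hgP
      exact hgP.not_ge consumedAt_le_one
    obtain ⟨g', hg'⟩ := exists_psTop (hord b) hg
    refine ⟨g', ?_, by rwa [psTop_congr (hhonest b hb)]⟩
    rcases psTop_eq_or_notMem (hord b) htop hg' hg with rfl | hg'k
    · exact mem_filter.2 ⟨mem_univ _, sub_pos.2 hgP⟩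
    · refine mem_filter.2 ⟨mem_univ _, sub_pos.2 ?_⟩
      rw [consumedAt_eq_one hk (h₁.trans ht₁) ht.le hg'k]
      exact consumedAt_lt_one hk' (h₁'.trans ht₁) ht' (psTop_mem hg')
  have hcount : ∑ g ∈ P, (N g - N' g) ≤ #C := by
    rw [sum_sub_distrib, sub_le_iff_le_add']
    simp only [N, N']
    exact_mod_cast sum_card_psN_le_add_card P C hlagging
  calc deficit pref pref' t
      ≤ deficit pref pref' t₁ + ∑ g ∈ P, (consumedAt pref t g - consumedAt pref' t g -
          (consumedAt pref t₁ g - consumedAt pref' t₁ g)) :=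
        sub_le_iff_le_add'.1 (sum_max_zero_sub_le univ _ _)
    _ = deficit pref pref' t₁ + (t - t₁) * ∑ g ∈ P, (N g - N' g) := by
        rw [sum_congr rfl fun g _ => hgrowth g, mul_sum]
    _ ≤ deficit pref pref' t₁ + #C * (t - t₁) := by
        have := mul_le_mul_of_nonneg_left hcount (sub_nonneg.2 ht₁)
        linarith

theorem eventually_deficit_le (hn : 0 < n) (hord : ∀ a, IsOrder (pref a))
    (hord' : ∀ a, IsOrder (pref' a)) (hhonest : ∀ b ∉ C, pref' b = pref b) {t₁ : ℝ}
    (h₀ : 0 ≤ t₁) (ht₁ : t₁ < stepTime pref m) :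
    ∀ᶠ t in 𝓝[>] t₁, deficit pref pref' t ≤ deficit pref pref' t₁ + #C * (t - t₁) := by
  obtain ⟨k, hk, h₁, h₂⟩ := exists_mem_step h₀ ht₁
  rcases lt_or_ge t₁ (stepTime pref' m) with ht₁' | ht₁'
  · obtain ⟨k', hk', h₁', h₂'⟩ := exists_mem_step h₀ ht₁'
    filter_upwards [Ioo_mem_nhdsGT (lt_min h₂ h₂')] with t ht
    exact deficit_le_add_of_mem_step hord hhonest hk hk' h₁ h₁' ht.1.le
      (ht.2.trans_le (min_le_left _ _)) (ht.2.trans_le (min_le_right _ _))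
  · -- Once everything is eaten under `pref'`, nothing lags behind.
    filter_upwards [self_mem_nhdsWithin] with t ht
    have hzero : deficit pref pref' t = 0 := sum_eq_zero fun g _ => by
      rw [consumedAt_eq_one_of_le hn hord' (ht₁'.trans (le_of_lt ht))]
      exact max_eq_left (sub_nonpos.2 consumedAt_le_one)
    rw [hzero]
    exact add_nonneg (deficit_nonneg t₁)
      (mul_nonneg (Nat.cast_nonneg _) (sub_nonneg.2 (le_of_lt ht)))

theorem deficit_le (hn : 0 < n) (hord : ∀ a, IsOrder (pref a))
    (hord' : ∀ a, IsOrder (pref' a)) (hhonest : ∀ b ∉ C, pref' b = pref b) {T : ℝ} (h₀ : 0 ≤ T)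
    (hT : T ≤ stepTime pref m) : deficit pref pref' T ≤ #C * T := by
  simpa [deficit_zero] using le_add_mul_of_eventually_le (b := stepTime pref m)
    continuous_deficit.continuousOn
    (fun t ht => eventually_deficit_le hn hord hord' hhonest ht.1 ht.2) T ⟨h₀, hT⟩

end Deficit

section Bounds

variable {n m : ℕ} {pref pref' : Fin n → List (Fin m)} {C : Finset (Fin n)} {a : Fin n}
  {U : Finset (Fin m)}

/-- As long as some good of a top segment `U` is available, agent `a` eats from `U`. -/
theorem stepTime_le_sum_alloc (hord : ∀ a, IsOrder (pref a)) (hU : IsTopSegment (pref a) U)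
    {K : ℕ} (hK : ∀ j < K, ∃ g ∈ U, g ∈ avail pref j) :
    stepTime pref K ≤ ∑ g ∈ U, alloc pref K a g := by
  induction K with
  | zero => exact stepTime_zero (pref := pref) ▸ sum_nonneg fun _ _ => alloc_nonneg
  | succ K ih =>
    obtain ⟨g, hgU, hg⟩ := hK K K.lt_succ_self
    obtain ⟨g₀, hg₀⟩ := exists_psTop (hord a) hg
    have hrate : ∑ g ∈ U, eatRate pref K a g = 1 := by
      simp [eatRate, hg₀, psTop_mem_of_isTopSegment (hord a) hU hg₀ hgU hg]
    have hprev := ih fun j hj => hK j (hj.trans K.lt_succ_self)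
    simp only [stepTime_succ, alloc_succ, sum_add_distrib, ← mul_sum, hrate, mul_one]
    linarith

theorem sum_psAlloc_le_of_forall_notMem_avail (hn : 0 < n) (hord : ∀ a, IsOrder (pref a))
    (hord' : ∀ a, IsOrder (pref' a)) (hhonest : ∀ b ∉ C, pref' b = pref b) {K : ℕ}
    (hK : K ≤ m) (hU : ∀ g ∈ U, g ∉ avail pref K) :
    ∑ g ∈ U, psAlloc pref' a g ≤ (#C + 1) * stepTime pref K := by
  have hdone : ∀ g ∈ U, consumedAt pref (stepTime pref K) g = 1 := fun g hg => by
    simp only [consumedAt, allocAt_stepTime hK]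
    exact consumed_eq_one (hU g hg)
  set T := stepTime pref K
  have hT₀ : 0 ≤ T := stepTime_nonneg
  have hlate (g : Fin m) :
      psAlloc pref' a g - allocAt pref' T a g ≤ 1 - consumedAt pref' T g := by
    calc psAlloc pref' a g - allocAt pref' T a g
        ≤ ∑ b, (alloc pref' m b g - allocAt pref' T b g) :=
          single_le_sum (f := fun b => alloc pref' m b g - allocAt pref' T b g)
            (fun b _ => sub_nonneg.2 allocAt_le_alloc) (mem_univ a)
      _ ≤ 1 - consumedAt pref' T g := by
          rw [sum_sub_distrib]
          exact sub_le_sub_right consumed_le_one _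
  calc ∑ g ∈ U, psAlloc pref' a g
      = ∑ g ∈ U, allocAt pref' T a g +
          ∑ g ∈ U, (psAlloc pref' a g - allocAt pref' T a g) := by
        rw [← sum_add_distrib]
        simp
    _ ≤ T + ∑ g ∈ U, max 0 (consumedAt pref T g - consumedAt pref' T g) := by
        refine add_le_add ((sum_le_sum_of_subset_of_nonneg (subset_univ U) fun g _ _ => ?_).trans
          (sum_allocAt_le hT₀)) (sum_le_sum fun g hg => ?_)
        · exact allocAt_nonneg
        · rw [hdone g hg]
          exact (hlate g).trans (le_max_right _ _)
    _ ≤ T + deficit pref pref' T := by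
        gcongr
        exact sum_le_sum_of_subset_of_nonneg (subset_univ U) fun _ _ _ => le_max_left _ _
    _ ≤ (#C + 1) * T := by
        linarith [deficit_le hn hord hord' hhonest hT₀ (stepTime_mono hK)]

theorem sum_psAlloc_le_of_isTopSegment (hn : 0 < n) (hord : ∀ a, IsOrder (pref a))
    (hord' : ∀ a, IsOrder (pref' a)) (hhonest : ∀ b ∉ C, pref' b = pref b)
    (hU : IsTopSegment (pref a) U) :
    ∑ g ∈ U, psAlloc pref' a g ≤ (#C + 1) * ∑ g ∈ U, psAlloc pref a g := by
  classical
  have hex : ∃ K, ∀ g ∈ U, g ∉ avail pref K := ⟨m, by simp [avail_eq_empty hn hord]⟩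
  have hK : Nat.find hex ≤ m := Nat.find_min' hex (by simp [avail_eq_empty hn hord])
  calc ∑ g ∈ U, psAlloc pref' a g ≤ (#C + 1) * stepTime pref (Nat.find hex) :=
        sum_psAlloc_le_of_forall_notMem_avail hn hord hord' hhonest hK (Nat.find_spec hex)
    _ ≤ (#C + 1) * ∑ g ∈ U, alloc pref (Nat.find hex) a g := by
        gcongr
        refine stepTime_le_sum_alloc hord hU fun j hj => ?_
        simpa using Nat.find_min hex hj
    _ ≤ (#C + 1) * ∑ g ∈ U, psAlloc pref a g := by
        gcongr with g
        exact alloc_mono hK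

end Bounds
end ProbabilisticSerial

open ProbabilisticSerial in
theorem stmt15_general (c : ℕ) (n m : ℕ) (hn : 0 < n)
    (v : Fin n → Fin m → ℝ) (hv : ∀ a g, 0 ≤ v a g)
    (pref pref' : Fin n → List (Fin m))
    (horder : ∀ a, IsOrder (pref a)) (horder' : ∀ a, IsOrder (pref' a))
    (hcons : ∀ a, Consistent (v a) (pref a))
    (C : Finset (Fin n)) (hC : C.card ≤ c)
    (hhonest : ∀ a ∉ C, pref' a = pref a) :
    ∀ a ∈ C, (∑ g, v a g * psAlloc pref' a g) ≤
      ((c : ℝ) + 1) * ∑ g, v a g * psAlloc pref a g := by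
  intro a _
  have hsegment (s : ℝ) : IsTopSegment (pref a) (univ.filter fun g => s < v a g) :=
    fun g hg g' hidx => by
      simp only [mem_filter, mem_univ, true_and] at hg ⊢
      by_contra h
      exact (hcons a g g' (by linarith)).not_ge hidx
  have hvalue := sum_mul_le_sum_mul_of_forall_sum_filter_le (hv a)
    (y := psAlloc pref' a) (z := fun g => (#C + 1) * psAlloc pref a g) fun s _ => by
      rw [← mul_sum]
      exact sum_psAlloc_le_of_isTopSegment hn horder horder' hhonest (hsegment s)
  have hnonneg : 0 ≤ ∑ g, v a g * psAlloc pref a g :=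
    sum_nonneg fun g _ => mul_nonneg (hv a g) alloc_nonneg
  calc ∑ g, v a g * psAlloc pref' a g ≤ (#C + 1) * ∑ g, v a g * psAlloc pref a g := by
        rw [mul_sum]
        simpa only [mul_left_comm] using hvalue
    _ ≤ (c + 1) * ∑ g, v a g * psAlloc pref a g := by
        gcongr

/-- SGIR upper bound `c + 1` for Probabilistic Serial. -/
theorem stmt15 (c : ℕ) (hc : 1 ≤ c) (n m : ℕ) (hn : 0 < n)
    (v : Fin n → Fin m → ℝ) (hv : ∀ a g, 0 ≤ v a g)
    (pref pref' : Fin n → List (Fin m))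
    (horder : ∀ a, IsOrder (pref a)) (horder' : ∀ a, IsOrder (pref' a))
    (hcons : ∀ a, Consistent (v a) (pref a))
    (C : Finset (Fin n)) (hC : C.card ≤ c)
    (hhonest : ∀ a ∉ C, pref' a = pref a)
    (hbetter : ∀ a ∈ C,
      (∑ g, v a g * psAlloc pref a g) ≤ ∑ g, v a g * psAlloc pref' a g) :
    ∀ a ∈ C, (∑ g, v a g * psAlloc pref' a g) ≤
      ((c : ℝ) + 1) * ∑ g, v a g * psAlloc pref a g :=
  stmt15_general c n m hn v hv pref pref' horder horder' hcons C hC hhonest
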